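/- The group Sym(Γ) of all symmetries of the tournament Γ has order exactly 1053. -/

import Mathlib

/-- `F₂₇`, a finite field with 27 elements. -/
abbrev F27 : Type := GaloisField 3 3

/-- `a` is a nonzero square in `F₂₇`. -/
def IsNonzeroSquare (a : F27) : Prop := a ≠ 0 ∧ ∃ c : F27, a = c ^ 2

/-- `g` is a symmetry of the tournament `Γ` on `F₂₇` whose directed edges `(a, b)`
are the pairs with `b - a` a nonzero square. -/
def IsTournamentSym (g : Equiv.Perm F27) : Prop :=
  ∀ a b : F27, IsNonzeroSquare (b - a) ↔ IsNonzeroSquare (g b - g a)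

/-!
The nonzero squares of `F₂₇` are the roots of `a ^ 13 = 1`, a multiplicative and Galois-stable
condition, so every map `x ↦ a σ(x) + b` with `a` a nonzero square and `σ` a field automorphism is
a symmetry. Conversely, composing a symmetry `g` with such a map we may assume `g 0 = 0` and
`g 1 = 1`; an exhaustive backtracking search, run by the kernel in an explicit model of `F₂₇`,
shows that `g` is then a power of the Frobenius. Hence `Sym(Γ)` is in bijection with
`13 × 27 × 3` parameters `(a, b, σ)`.
-/

section Semiaffine

variable {K : Type*} [Field K]

def semiaffinePerm (a : Kˣ) (σ : K ≃+* K) (b : K) : Equiv.Perm K :=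
  σ.toEquiv.trans ((Units.mulLeft a).trans (Equiv.addRight b))

@[simp] theorem semiaffinePerm_apply (a : Kˣ) (σ : K ≃+* K) (b x : K) :
    semiaffinePerm a σ b x = a * σ x + b := rfl

theorem semiaffinePerm_sub (a : Kˣ) (σ : K ≃+* K) (b x y : K) :
    semiaffinePerm a σ b y - semiaffinePerm a σ b x = a * σ (y - x) := by
  simp only [semiaffinePerm_apply, map_sub]
  ring

theorem semiaffinePerm_inj {a a' : Kˣ} {σ σ' : K ≃+* K} {b b' : K} :
    semiaffinePerm a σ b = semiaffinePerm a' σ' b' ↔ a = a' ∧ σ = σ' ∧ b = b' := by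
  refine ⟨fun h => ?_, by rintro ⟨rfl, rfl, rfl⟩; rfl⟩
  have hb : b = b' := by simpa using DFunLike.congr_fun h 0
  have ha : a = a' := Units.ext <| by simpa [hb] using DFunLike.congr_fun h 1
  refine ⟨ha, RingEquiv.ext fun x => ?_, hb⟩
  simpa [ha, hb] using DFunLike.congr_fun h x

end Semiaffine

theorem FiniteField.ne_zero_and_isSquare_iff {F : Type*} [Field F] [Fintype F]
    (hF : ringChar F ≠ 2) (a : F) : a ≠ 0 ∧ IsSquare a ↔ a ^ (Fintype.card F / 2) = 1 := by
  refine ⟨fun ⟨ha, hsq⟩ => (FiniteField.isSquare_iff hF ha).mp hsq, fun h => ?_⟩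
  have ha : a ≠ 0 := by
    rintro rfl
    rw [zero_pow (Nat.div_pos Fintype.one_lt_card two_pos).ne'] at h
    exact zero_ne_one h
  exact ⟨ha, (FiniteField.isSquare_iff hF ha).mpr h⟩

/-- `ZMod 3 [α] / (α ^ 3 - α - 1)`, the triple `(a, b, c)` standing for `a + b α + c α ^ 2`. -/
def K27 : Type := ZMod 3 × ZMod 3 × ZMod 3

namespace K27

instance : DecidableEq K27 := inferInstanceAs (DecidableEq (ZMod 3 × ZMod 3 × ZMod 3))
instance : Fintype K27 := inferInstanceAs (Fintype (ZMod 3 × ZMod 3 × ZMod 3))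

def c0 (u : K27) : ZMod 3 := u.1
def c1 (u : K27) : ZMod 3 := u.2.1
def c2 (u : K27) : ZMod 3 := u.2.2

instance : Zero K27 := ⟨(0, 0, 0)⟩
instance : One K27 := ⟨(1, 0, 0)⟩
instance : Add K27 := ⟨fun u v => (c0 u + c0 v, c1 u + c1 v, c2 u + c2 v)⟩
instance : Neg K27 := ⟨fun u => (-c0 u, -c1 u, -c2 u)⟩
instance : Mul K27 := ⟨fun u v =>
  (c0 u * c0 v + c1 u * c2 v + c2 u * c1 v,
   c0 u * c1 v + c1 u * c0 v + c1 u * c2 v + c2 u * c1 v + c2 u * c2 v,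
   c0 u * c2 v + c1 u * c1 v + c2 u * c0 v + c2 u * c2 v)⟩

@[ext] theorem ext {u v : K27} (h0 : c0 u = c0 v) (h1 : c1 u = c1 v) (h2 : c2 u = c2 v) :
    u = v :=
  Prod.ext h0 (Prod.ext h1 h2)

@[simp] theorem c0_zero : c0 0 = 0 := rfl
@[simp] theorem c1_zero : c1 0 = 0 := rfl
@[simp] theorem c2_zero : c2 0 = 0 := rfl
@[simp] theorem c0_one : c0 1 = 1 := rfl
@[simp] theorem c1_one : c1 1 = 0 := rfl
@[simp] theorem c2_one : c2 1 = 0 := rfl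
@[simp] theorem c0_add (u v : K27) : c0 (u + v) = c0 u + c0 v := rfl
@[simp] theorem c1_add (u v : K27) : c1 (u + v) = c1 u + c1 v := rfl
@[simp] theorem c2_add (u v : K27) : c2 (u + v) = c2 u + c2 v := rfl
@[simp] theorem c0_neg (u : K27) : c0 (-u) = -c0 u := rfl
@[simp] theorem c1_neg (u : K27) : c1 (-u) = -c1 u := rfl
@[simp] theorem c2_neg (u : K27) : c2 (-u) = -c2 u := rfl
@[simp] theorem c0_mul (u v : K27) : c0 (u * v) = c0 u * c0 v + c1 u * c2 v + c2 u * c1 v := rfl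
@[simp] theorem c1_mul (u v : K27) :
    c1 (u * v) = c0 u * c1 v + c1 u * c0 v + c1 u * c2 v + c2 u * c1 v + c2 u * c2 v := rfl
@[simp] theorem c2_mul (u v : K27) :
    c2 (u * v) = c0 u * c2 v + c1 u * c1 v + c2 u * c0 v + c2 u * c2 v := rfl

instance : CommRing K27 where
  add_assoc _ _ _ := by ext <;> simp <;> ring
  zero_add _ := by ext <;> simp
  add_zero _ := by ext <;> simp
  add_comm _ _ := by ext <;> simp <;> ring
  neg_add_cancel _ := by ext <;> simp
  mul_assoc _ _ _ := by ext <;> simp <;> ring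
  one_mul _ := by ext <;> simp
  mul_one _ := by ext <;> simp
  mul_comm _ _ := by ext <;> simp <;> ring
  left_distrib _ _ _ := by ext <;> simp <;> ring
  right_distrib _ _ _ := by ext <;> simp <;> ring
  zero_mul _ := by ext <;> simp
  mul_zero _ := by ext <;> simp
  nsmul := nsmulRec
  zsmul := zsmulRec

-- `u⁻¹ = u ^ 25` since the unit group has order 26
instance : Field K27 where
  inv u := u ^ 25
  exists_pair_ne := ⟨0, 1, by decide⟩
  mul_inv_cancel := by decide +kernel
  inv_zero := by decide +kernel
  nnqsmul := _
  qsmul := _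

theorem card_eq : Fintype.card K27 = 27 := rfl

def elems : List K27 :=
  [2, 1, 0].flatMap fun c => [2, 1, 0].flatMap fun b => [2, 1, 0].map fun a => (a, b, c)

theorem mem_elems (x : K27) : x ∈ elems := by revert x; decide

def squares : List K27 := elems.filter (· ^ 13 = 1)

theorem mem_squares (t : K27) : t ∈ squares ↔ t ^ 13 = 1 := by
  simp [squares, mem_elems]

def candidates (x : K27) : List K27 := if x = 0 then [0] else if x = 1 then [1] else elems

-- Backtracking enumeration of the candidate images of `xs` under maps fixing `0` and `1` that
-- preserve which differences are squares; the last entry of `xs` is assigned first, which is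
-- why `elems` ends with `1, 0`.
def images : List K27 → List (List K27)
  | [] => [[]]
  | x :: xs =>
    let row := xs.map fun u => decide (x - u ∈ squares)
    (images xs).flatMap fun ys =>
      ((candidates x).filter fun y => row == ys.map fun w => decide (y - w ∈ squares)).map (· :: ys)

theorem images_elems : ∀ ys ∈ images elems, ∃ i < 3, ys = elems.map (· ^ 3 ^ i) := by
  decide +kernel

theorem card_pow_thirteen_eq_one : Fintype.card {t : K27 // t ^ 13 = 1} = 13 := by
  decide +kernel

theorem map_mem_images (g : K27 → K27) (hg : ∀ a b, b - a ∈ squares ↔ g b - g a ∈ squares)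
    (h0 : g 0 = 0) (h1 : g 1 = 1) : ∀ xs : List K27, xs.map g ∈ images xs
  | [] => List.mem_singleton_self _
  | x :: xs => by
    simp only [images, List.map_cons, List.mem_flatMap, List.mem_map, List.mem_filter]
    refine ⟨xs.map g, map_mem_images g hg h0 h1 xs, g x, ⟨?_, ?_⟩, rfl⟩
    · unfold candidates
      split_ifs with hx0 hx1
      · simp [hx0, h0]
      · simp [hx1, h1]
      · exact mem_elems _
    · rw [beq_iff_eq, List.map_map]
      exact List.map_congr_left fun u _ => by simp [hg u x]

theorem eq_pow_of_preserves (g : K27 → K27) (hg : ∀ a b, (b - a) ^ 13 = 1 ↔ (g b - g a) ^ 13 = 1)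
    (h0 : g 0 = 0) (h1 : g 1 = 1) : ∃ i < 3, ∀ x, g x = x ^ 3 ^ i := by
  simp only [← mem_squares] at hg
  obtain ⟨i, hi, hgi⟩ := images_elems _ (map_mem_images g hg h0 h1 elems)
  exact ⟨i, hi, fun x => List.map_inj_left.mp hgi x (mem_elems x)⟩

end K27

theorem card_F27 : Nat.card F27 = 27 := GaloisField.card 3 3 (by norm_num)

theorem isNonzeroSquare_iff_pow_thirteen (a : F27) : IsNonzeroSquare a ↔ a ^ 13 = 1 := by
  have := Fintype.ofFinite F27
  have hchar : ringChar F27 ≠ 2 := by rw [ringChar.eq F27 3]; norm_num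
  have hcard : Fintype.card F27 / 2 = 13 := by rw [← Nat.card_eq_fintype_card, card_F27]
  rw [← hcard, ← FiniteField.ne_zero_and_isSquare_iff hchar, IsNonzeroSquare,
    isSquare_iff_exists_sq]

theorem isNonzeroSquare_mul_iff {c : F27} (hc : IsNonzeroSquare c) (t : F27) :
    IsNonzeroSquare (c * t) ↔ IsNonzeroSquare t := by
  rw [isNonzeroSquare_iff_pow_thirteen] at hc
  rw [isNonzeroSquare_iff_pow_thirteen, isNonzeroSquare_iff_pow_thirteen, mul_pow, hc, one_mul]

theorem isNonzeroSquare_ringEquiv_apply_iff {K : Type*} [Semiring K] (e : K ≃+* F27) (t : K) :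
    IsNonzeroSquare (e t) ↔ t ^ 13 = 1 := by
  rw [isNonzeroSquare_iff_pow_thirteen, ← map_pow, map_eq_one_iff e e.injective]

theorem isTournamentSym_semiaffinePerm {a : F27ˣ} (ha : IsNonzeroSquare a) (σ : F27 ≃+* F27)
    (b : F27) : IsTournamentSym (semiaffinePerm a σ b) := fun x y => by
  rw [semiaffinePerm_sub, isNonzeroSquare_mul_iff ha, isNonzeroSquare_ringEquiv_apply_iff,
    isNonzeroSquare_iff_pow_thirteen]

noncomputable def K27.ringEquiv : K27 ≃+* F27 :=
  letI := Fintype.ofFinite F27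
  FiniteField.ringEquivOfCardEq <| by rw [K27.card_eq, ← Nat.card_eq_fintype_card, card_F27]

theorem exists_algEquiv_eq_of_preserves (h : F27 → F27)
    (hh : ∀ x y, IsNonzeroSquare (y - x) ↔ IsNonzeroSquare (h y - h x)) (h0 : h 0 = 0)
    (h1 : h 1 = 1) : ∃ σ : F27 ≃ₐ[ZMod 3] F27, ⇑σ = h := by
  let e := K27.ringEquiv
  obtain ⟨i, -, hi⟩ := K27.eq_pow_of_preserves (e.symm ∘ h ∘ e)
    (fun a b => by
      rw [← isNonzeroSquare_ringEquiv_apply_iff e, ← isNonzeroSquare_ringEquiv_apply_iff e]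
      simpa using hh (e a) (e b))
    (by simp [h0]) (by simp [h1])
  refine ⟨FiniteField.frobeniusAlgEquivOfAlgebraic (ZMod 3) F27 ^ i, funext fun x => ?_⟩
  have hx : h x = x ^ 3 ^ i := by simpa using congrArg e (hi (e.symm x))
  rw [AlgEquiv.coe_pow, FiniteField.coe_frobeniusAlgEquivOfAlgebraic_iterate, ZMod.card, hx]

def tournamentSymGroup : Subgroup (Equiv.Perm F27) where
  carrier := {g | IsTournamentSym g}
  one_mem' _ _ := Iff.rfl
  mul_mem' hg hh a b := (hh a b).trans (hg _ _)
  inv_mem' {g} hg a b := by simpa using (hg (g⁻¹ a) (g⁻¹ b)).symm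

noncomputable def semiaffineSym :
    {a : F27 // IsNonzeroSquare a} × F27 × (F27 ≃ₐ[ZMod 3] F27) → tournamentSymGroup :=
  fun ⟨a, b, σ⟩ => ⟨semiaffinePerm (Units.mk0 a a.2.1) σ b,
    isTournamentSym_semiaffinePerm a.2 σ b⟩

theorem semiaffineSym_injective : Function.Injective semiaffineSym := by
  rintro ⟨a, b, σ⟩ ⟨a', b', σ'⟩ h
  obtain ⟨ha, hσ, hb⟩ := semiaffinePerm_inj.mp (congrArg Subtype.val h)
  rw [Units.mk0_inj] at ha
  rw [Subtype.ext ha, hb, AlgEquiv.coe_ringEquiv_injective hσ]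

theorem semiaffineSym_surjective : Function.Surjective semiaffineSym := by
  rintro ⟨g, hg⟩
  have ha : IsNonzeroSquare (g 1 - g 0) := by
    simpa using (hg 0 1).mp (by simp [isNonzeroSquare_iff_pow_thirteen])
  set a := g 1 - g 0
  have ha₀ : a ≠ 0 := ha.1
  have ha' : IsNonzeroSquare a⁻¹ := by
    rw [isNonzeroSquare_iff_pow_thirteen] at ha ⊢
    rw [inv_pow, ha, inv_one]
  obtain ⟨σ, hσ⟩ := exists_algEquiv_eq_of_preserves (fun x => a⁻¹ * (g x - g 0))
    (fun x y => by
      rw [← mul_sub, sub_sub_sub_cancel_right, isNonzeroSquare_mul_iff ha']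
      exact hg x y)
    (by simp) (inv_mul_cancel₀ ha₀)
  refine ⟨⟨⟨a, ha⟩, g 0, σ⟩, Subtype.ext (Equiv.ext fun x => ?_)⟩
  change a * σ x + g 0 = g x
  rw [hσ, mul_inv_cancel_left₀ ha₀, sub_add_cancel]

theorem card_isNonzeroSquare : Nat.card {a : F27 // IsNonzeroSquare a} = 13 := by
  rw [← K27.card_pow_thirteen_eq_one, ← Nat.card_eq_fintype_card]
  exact Nat.card_congr (K27.ringEquiv.toEquiv.subtypeEquiv
    fun t => (isNonzeroSquare_ringEquiv_apply_iff _ t).symm).symm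

theorem card_algEquiv_F27 : Nat.card (F27 ≃ₐ[ZMod 3] F27) = 3 :=
  (IsGalois.card_aut_eq_finrank (ZMod 3) F27).trans (GaloisField.finrank 3 (by norm_num))

/-- The group `Sym(Γ)` of all symmetries of the tournament `Γ` has order exactly 1053. -/
theorem statement7 :
    ∃ S : Subgroup (Equiv.Perm F27),
      (S : Set (Equiv.Perm F27)) = { g | IsTournamentSym g } ∧
      Nat.card S = 1053 := by
  refine ⟨tournamentSymGroup, rfl, ?_⟩
  rw [← Nat.card_congr (Equiv.ofBijective _ ⟨semiaffineSym_injective, semiaffineSym_surjective⟩),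
    Nat.card_prod, Nat.card_prod, card_isNonzeroSquare, card_F27, card_algEquiv_F27]
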